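/- Let 0 < a < b, set r = a/b, let M ≥ 0, and let K : [r,1] → ℝ be continuous on [r,1] and differentiable on (r,1) with K'(θ) ≤ −M for all θ ∈ (r,1). Then b² ∫_r^1 (K(θ) − K(1)) dθ ≥ (M/2)(b − a)². -/

import Mathlib

open Set

/-! A derivative bounded by `-M` forces `K θ - K 1 ≥ M (1 - θ)` on `[r, 1]` (mean value theorem);
integrating gives `∫_r^1 (K θ - K 1) dθ ≥ M (1 - r)² / 2`, and `b (1 - r) = b - a`. -/

section

variable {f f' : ℝ → ℝ} {a b M : ℝ}

theorem mul_sub_le_sub_of_hasDerivAt_le_neg (hf : ContinuousOn f (Icc a b))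
    (hf' : ∀ x ∈ Ioo a b, HasDerivAt f (f' x) x) (hle : ∀ x ∈ Ioo a b, f' x ≤ -M)
    {x : ℝ} (hx : x ∈ Icc a b) : M * (b - x) ≤ f x - f b := by
  rcases hx.2.eq_or_lt with rfl | hxb
  · simp
  obtain ⟨c, hc, hslope⟩ := exists_hasDerivAt_eq_slope f f' hxb
    (hf.mono (Icc_subset_Icc_left hx.1))
    (fun y hy => hf' y (Ioo_subset_Ioo_left hx.1 hy))
  have hc_le := hle c (Ioo_subset_Ioo_left hx.1 hc)
  rw [hslope, div_le_iff₀ (sub_pos.2 hxb)] at hc_le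
  linarith

theorem integral_mul_sub_left (M a b : ℝ) :
    ∫ x in a..b, M * (b - x) = M * (b - a) ^ 2 / 2 := by
  rw [intervalIntegral.integral_const_mul, intervalIntegral.integral_comp_sub_left (fun x => x),
    sub_self, integral_id]
  ring

theorem mul_sq_div_two_le_integral_sub_of_hasDerivAt_le_neg (hab : a ≤ b)
    (hf : ContinuousOn f (Icc a b)) (hf' : ∀ x ∈ Ioo a b, HasDerivAt f (f' x) x)
    (hle : ∀ x ∈ Ioo a b, f' x ≤ -M) :
    M * (b - a) ^ 2 / 2 ≤ ∫ x in a..b, (f x - f b) := by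
  rw [← integral_mul_sub_left]
  refine intervalIntegral.integral_mono_on hab
    (Continuous.intervalIntegrable (by fun_prop) a b) ?_
    (fun x hx => mul_sub_le_sub_of_hasDerivAt_le_neg hf hf' hle hx)
  exact (hf.sub continuousOn_const).intervalIntegrable_of_Icc hab

end

theorem kernel_integral_lower_bound
    (a b r M : ℝ) (ha : 0 < a) (hab : a < b) (hr : r = a / b)
    (K K' : ℝ → ℝ)
    (hKcont : ContinuousOn K (Icc r 1))
    (hK' : ∀ θ ∈ Ioo r 1, HasDerivAt K (K' θ) θ)
    (hK'le : ∀ θ ∈ Ioo r 1, K' θ ≤ -M) :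
    M / 2 * (b - a) ^ 2 ≤ b ^ 2 * ∫ θ in r..1, (K θ - K 1) := by
  have hb : 0 < b := ha.trans hab
  have hr1 : r ≤ 1 := by rw [hr]; exact (div_le_one hb).2 hab.le
  have hbr : b ^ 2 * (1 - r) ^ 2 = (b - a) ^ 2 := by
    rw [hr, ← mul_pow, mul_sub, mul_div_cancel₀ a hb.ne', mul_one]
  have hint := mul_sq_div_two_le_integral_sub_of_hasDerivAt_le_neg hr1 hKcont hK' hK'le
  calc M / 2 * (b - a) ^ 2 = b ^ 2 * (M * (1 - r) ^ 2 / 2) := by rw [← hbr]; ring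
    _ ≤ b ^ 2 * ∫ θ in r..1, (K θ - K 1) := by gcongr
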